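/- arXiv:1409.4059 — 6 statements merged into one kernel-verified Lean document; each statement's English description precedes it below -/
import Mathlib

section
/- Let h be a C² function on [a,b] with h' monotone and |h'(x)| > A > 0 on [a,b], and let φ be C¹ on [a,b]. Then |∫_a^b e^{ih(x)} φ(x) dx| ≤ c·A^{-1}·(|φ(b)| + ∫_a^b |φ'(x)| dx) for an absolute constant c. -/
/-!
With `F x = ∫_a^x e^{ih}`, integration by parts gives `∫ e^{ih} φ = F b φ b - ∫ F φ'`, so it
suffices to bound `F` uniformly by `6 / A`. For that, integrate by parts once more, writing
`e^{ih} = (h' e^{ih}) · (1 / h')`: the first factor is `-i (e^{ih})'`, whose primitive has modulus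
at most `2`, and since `h'` is monotone and, by the intermediate value theorem, of constant sign,
`1 / h'` is monotone, so its total variation is at most `|1/h'(x) - 1/h'(a)| ≤ 2 / A`.
-/

open MeasureTheory intervalIntegral Set

variable {a b : ℝ}

theorem inv_le_inv_of_mul_pos {x y : ℝ} (hxy : 0 < x * y) (h : x ≤ y) : y⁻¹ ≤ x⁻¹ := by
  have hx : x ≠ 0 := left_ne_zero_of_mul hxy.ne'
  have hy : y ≠ 0 := right_ne_zero_of_mul hxy.ne'
  rw [← sub_nonneg, show x⁻¹ - y⁻¹ = (y - x) / (x * y) by field_simp]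
  exact div_nonneg (sub_nonneg.2 h) hxy.le

theorem IsPreconnected.mul_pos_of_ne_zero {α : Type*} [TopologicalSpace α] {s : Set α}
    {g : α → ℝ} (hs : IsPreconnected s) (hg : ContinuousOn g s) (h0 : ∀ x ∈ s, g x ≠ 0)
    {x y : α} (hx : x ∈ s) (hy : y ∈ s) : 0 < g x * g y := by
  have no_sign_change : ∀ p ∈ s, ∀ q ∈ s, g p < 0 → 0 < g q → False :=
    fun p hp q hq hp0 hq0 => by
      obtain ⟨z, hz, hz0⟩ := hs.intermediate_value hp hq hg ⟨hp0.le, hq0.le⟩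
      exact h0 z hz hz0
  rcases (h0 x hx).lt_or_gt with hx0 | hx0 <;> rcases (h0 y hy).lt_or_gt with hy0 | hy0
  · exact mul_pos_of_neg_of_neg hx0 hy0
  · exact (no_sign_change x hx y hy hx0 hy0).elim
  · exact (no_sign_change y hy x hx hy0 hx0).elim
  · exact mul_pos hx0 hy0

theorem IsPreconnected.monotoneOn_or_antitoneOn_inv {α : Type*} [TopologicalSpace α]
    [Preorder α] {s : Set α} {g : α → ℝ} (hs : IsPreconnected s) (hg : ContinuousOn g s)
    (h0 : ∀ x ∈ s, g x ≠ 0) (hmono : MonotoneOn g s ∨ AntitoneOn g s) :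
    MonotoneOn (fun x => (g x)⁻¹) s ∨ AntitoneOn (fun x => (g x)⁻¹) s :=
  hmono.symm.imp
    (fun hanti _ hx _ hy hxy =>
      inv_le_inv_of_mul_pos (hs.mul_pos_of_ne_zero hg h0 hy hx) (hanti hx hy hxy))
    (fun hmon _ hx _ hy hxy =>
      inv_le_inv_of_mul_pos (hs.mul_pos_of_ne_zero hg h0 hx hy) (hmon hx hy hxy))

section Deriv

variable {E : Type*} [NormedAddCommGroup E] [NormedSpace ℝ E] {f : ℝ → E}

theorem ContDiffOn.deriv_of_differentiableAt {s : Set ℝ} {m n : WithTop ℕ∞}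
    (hf : ContDiffOn ℝ n f s) (hs : UniqueDiffOn ℝ s) (hmn : m + 1 ≤ n)
    (hdiff : ∀ x ∈ s, DifferentiableAt ℝ f x) : ContDiffOn ℝ m (deriv f) s :=
  (hf.derivWithin hs hmn).congr fun x hx => ((hdiff x hx).derivWithin (hs x hx)).symm

theorem ContDiffOn.hasDerivAt_of_mem_Ioo {x : ℝ} (hf : ContDiffOn ℝ 1 f (Icc a b))
    (hx : x ∈ Ioo a b) : HasDerivAt f (deriv f x) x :=
  ((hf.differentiableOn one_ne_zero x (Ioo_subset_Icc_self hx)).differentiableAt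
    (Icc_mem_nhds hx.1 hx.2)).hasDerivAt

theorem ContDiffOn.intervalIntegrable_deriv (hab : a < b) (hf : ContDiffOn ℝ 1 f (Icc a b)) :
    IntervalIntegrable (deriv f) volume a b := by
  have hint : IntegrableOn (derivWithin f (Icc a b)) (Icc a b) :=
    (hf.continuousOn_derivWithin (uniqueDiffOn_Icc hab) le_rfl).integrableOn_Icc
  rw [intervalIntegrable_iff_integrableOn_Ioo_of_le hab.le]
  exact (hint.mono_set Ioo_subset_Icc_self).congr_fun
    (fun x hx => derivWithin_of_mem_nhds (Icc_mem_nhds hx.1 hx.2)) measurableSet_Ioo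

end Deriv

theorem MonotoneOn.integral_abs_deriv_le {f : ℝ → ℝ} (hab : a ≤ b)
    (hf : MonotoneOn f (Icc a b)) : ∫ x in a..b, |deriv f x| ≤ f b - f a := by
  have hderiv : ∀ x ∈ Ioo a b, 0 ≤ deriv f x := fun x hx => by
    rw [← derivWithin_of_mem_nhds (Icc_mem_nhds hx.1 hx.2)]
    exact hf.derivWithin_nonneg
  have habs : ∫ x in a..b, |deriv f x| = ∫ x in a..b, deriv f x := by
    refine integral_congr_ae ?_
    filter_upwards [(countable_singleton b).ae_notMem volume] with x hxb hx
    rw [uIoc_of_le hab] at hx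
    exact abs_of_nonneg (hderiv x ⟨hx.1, hx.2.lt_of_ne hxb⟩)
  have hfab : 0 ≤ f b - f a := sub_nonneg.2 (hf (left_mem_Icc.2 hab) (right_mem_Icc.2 hab) hab)
  have hmem := MonotoneOn.intervalIntegral_deriv_mem_uIcc (f := f) (by rwa [uIcc_of_le hab])
  rw [uIcc_of_le hfab] at hmem
  exact habs ▸ hmem.2

theorem integral_abs_deriv_le_abs_sub {f : ℝ → ℝ} (hab : a ≤ b)
    (hf : MonotoneOn f (Icc a b) ∨ AntitoneOn f (Icc a b)) :
    ∫ x in a..b, |deriv f x| ≤ |f b - f a| := by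
  rcases hf with hf | hf
  · exact (hf.integral_abs_deriv_le hab).trans (le_abs_self _)
  · have := hf.neg.integral_abs_deriv_le hab
    simp only [deriv.fun_neg, abs_neg] at this
    exact this.trans (by rw [abs_sub_comm]; exact (le_abs_self _).trans_eq' (by ring))

theorem integral_abs_deriv_inv_le {g : ℝ → ℝ} {A : ℝ} (hab : a ≤ b) (hA : 0 < A)
    (hg : ContinuousOn g (Icc a b)) (hmono : MonotoneOn g (Icc a b) ∨ AntitoneOn g (Icc a b))
    (hbig : ∀ x ∈ Icc a b, A < |g x|) :
    ∫ t in a..b, |deriv (fun t => (g t)⁻¹) t| ≤ 2 / A := by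
  have hinv_le : ∀ x ∈ Icc a b, |(g x)⁻¹| ≤ 1 / A := fun x hx => by
    rw [abs_inv, one_div]; exact inv_anti₀ hA (hbig x hx).le
  have hg0 : ∀ x ∈ Icc a b, g x ≠ 0 := fun x hx => abs_pos.1 (hA.trans (hbig x hx))
  calc ∫ t in a..b, |deriv (fun t => (g t)⁻¹) t|
      ≤ |(g b)⁻¹ - (g a)⁻¹| := integral_abs_deriv_le_abs_sub hab
        (isPreconnected_Icc.monotoneOn_or_antitoneOn_inv hg hg0 hmono)
    _ ≤ |(g b)⁻¹| + |(g a)⁻¹| := abs_sub _ _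
    _ ≤ 2 / A := by
      linarith [hinv_le b (right_mem_Icc.2 hab), hinv_le a (left_mem_Icc.2 hab),
        show 2 / A = 1 / A + 1 / A by ring]

theorem norm_integral_mul_le_of_norm_primitive_le {A : Type*} [NormedRing A] [NormedAlgebra ℝ A]
    [CompleteSpace A] {f φ φ' : ℝ → A} {K : ℝ} (hab : a < b) (hf : ContinuousOn f (Icc a b))
    (hφ : ContinuousOn φ (Icc a b)) (hφφ' : ∀ x ∈ Ioo a b, HasDerivAt φ (φ' x) x)
    (hφ' : IntervalIntegrable φ' volume a b) (hF : ∀ x ∈ Ioc a b, ‖∫ t in a..x, f t‖ ≤ K) :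
    ‖∫ t in a..b, f t * φ t‖ ≤ K * (‖φ b‖ + ∫ t in a..b, ‖φ' t‖) := by
  set F : ℝ → A := fun x => ∫ t in a..x, f t
  have hFf : ∀ x ∈ Ioo a b, HasDerivAt F (f x) x := fun x hx =>
    integral_hasDerivAt_right
      ((hf.mono (Icc_subset_Icc_right hx.2.le)).intervalIntegrable_of_Icc hx.1.le)
      ((hf.mono Ioo_subset_Icc_self).stronglyMeasurableAtFilter isOpen_Ioo x hx)
      (hf.continuousAt (Icc_mem_nhds hx.1 hx.2))
  have hFc : ContinuousOn F (Icc a b) := by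
    have := continuousOn_primitive_interval (μ := volume)
      (by rw [uIcc_of_le hab.le]; exact hf.integrableOn_Icc)
    rwa [uIcc_of_le hab.le] at this
  have parts : ∫ t in a..b, f t * φ t = F b * φ b - ∫ t in a..b, F t * φ' t := by
    rw [integral_mul_deriv_eq_deriv_mul_of_hasDerivAt (u := F) (v := φ)
      (by rwa [uIcc_of_le hab.le]) (by rwa [uIcc_of_le hab.le])
      (by simpa only [min_eq_left hab.le, max_eq_right hab.le] using hFf)
      (by simpa only [min_eq_left hab.le, max_eq_right hab.le] using hφφ')
      (hf.intervalIntegrable_of_Icc hab.le) hφ', show F a = 0 from integral_same, zero_mul,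
      sub_zero, sub_sub_cancel]
  have hFφ' : ‖∫ t in a..b, F t * φ' t‖ ≤ K * ∫ t in a..b, ‖φ' t‖ := by
    rw [← intervalIntegral.integral_const_mul]
    refine norm_integral_le_of_norm_le hab.le (ae_of_all _ fun t ht => ?_) (hφ'.norm.const_mul K)
    exact norm_mul_le_of_le (hF t ht) le_rfl
  calc ‖∫ t in a..b, f t * φ t‖
      ≤ ‖F b‖ * ‖φ b‖ + ‖∫ t in a..b, F t * φ' t‖ := by
        rw [parts]; exact (norm_sub_le _ _).trans (add_le_add_left (norm_mul_le _ _) _)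
    _ ≤ K * ‖φ b‖ + K * ∫ t in a..b, ‖φ' t‖ := by
        gcongr
        exact hF b (right_mem_Ioc.2 hab)
    _ = K * (‖φ b‖ + ∫ t in a..b, ‖φ' t‖) := by ring

theorem norm_integral_mul_exp_I_mul_le_two {h g : ℝ → ℝ} (hab : a ≤ b)
    (hhg : ∀ x ∈ Icc a b, HasDerivAt h (g x) x) (hg : ContinuousOn g (Icc a b)) :
    ‖∫ t in a..b, (g t : ℂ) * Complex.exp (Complex.I * (h t : ℂ))‖ ≤ 2 := by
  set e : ℝ → ℂ := fun t => Complex.exp (Complex.I * (h t : ℂ))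
  have he : ∀ x ∈ Icc a b, HasDerivAt e (Complex.I * g x * e x) x := fun x hx => by
    convert (((hhg x hx).ofReal_comp).const_mul Complex.I).cexp using 1
    ring
  have he_norm : ∀ t, ‖e t‖ = 1 := fun t => by
    simp only [e, mul_comm Complex.I]
    exact Complex.norm_exp_ofReal_mul_I _
  have hprim : ∀ x ∈ uIcc a b, HasDerivAt (fun t => -Complex.I * e t) ((g x : ℂ) * e x) x :=
    fun x hx => by
      rw [uIcc_of_le hab] at hx
      have := (he x hx).const_mul (-Complex.I)
      rwa [← mul_assoc, ← mul_assoc, neg_mul, Complex.I_mul_I, neg_neg, one_mul] at this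
  have hint : IntervalIntegrable (fun t => (g t : ℂ) * e t) volume a b :=
    ((Complex.continuous_ofReal.comp_continuousOn hg).mul
      fun x hx => (he x hx).continuousAt.continuousWithinAt).intervalIntegrable_of_Icc hab
  rw [integral_eq_sub_of_hasDerivAt hprim hint]
  calc ‖-Complex.I * e b - -Complex.I * e a‖
      ≤ ‖-Complex.I * e b‖ + ‖-Complex.I * e a‖ := norm_sub_le _ _
    _ = 2 := by simp only [norm_mul, norm_neg, Complex.norm_I, he_norm]; norm_num

theorem norm_integral_exp_I_mul_le {h : ℝ → ℝ} {A : ℝ} (hab : a < b) (hA : 0 < A)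
    (hh : ContDiffOn ℝ 2 h (Icc a b))
    (hmono : MonotoneOn (deriv h) (Icc a b) ∨ AntitoneOn (deriv h) (Icc a b))
    (hbig : ∀ x ∈ Icc a b, A < |deriv h x|) :
    ‖∫ t in a..b, Complex.exp (Complex.I * (h t : ℂ))‖ ≤ 6 / A := by
  set g := deriv h
  set u : ℝ → ℝ := fun t => (g t)⁻¹
  have hg0 : ∀ x ∈ Icc a b, g x ≠ 0 := fun x hx => abs_pos.1 (hA.trans (hbig x hx))
  -- `deriv h x ≠ 0` forces `h` to be differentiable at `x`, also at the endpoints `a` and `b`.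
  have hhg : ∀ x ∈ Icc a b, HasDerivAt h (g x) x := fun x hx =>
    (differentiableAt_of_deriv_ne_zero (hg0 x hx)).hasDerivAt
  have hg : ContDiffOn ℝ 1 g (Icc a b) :=
    hh.deriv_of_differentiableAt (uniqueDiffOn_Icc hab) le_rfl fun x hx =>
      (hhg x hx).differentiableAt
  have hu : ContDiffOn ℝ 1 u (Icc a b) := hg.inv hg0
  have hu_b : |u b| ≤ 1 / A := by
    rw [abs_inv, one_div]; exact inv_anti₀ hA (hbig b (right_mem_Icc.2 hab.le)).le
  have hcancel : ∫ t in a..b, Complex.exp (Complex.I * (h t : ℂ)) =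
      ∫ t in a..b, (g t : ℂ) * Complex.exp (Complex.I * (h t : ℂ)) * (u t : ℂ) := by
    refine integral_congr fun t ht => ?_
    rw [uIcc_of_le hab.le] at ht
    simp only [u, Complex.ofReal_inv]
    rw [mul_right_comm, mul_inv_cancel₀ (Complex.ofReal_ne_zero.2 (hg0 t ht)), one_mul]
  have hu' := hu.intervalIntegrable_deriv hab
  calc ‖∫ t in a..b, Complex.exp (Complex.I * (h t : ℂ))‖
      ≤ 2 * (‖(u b : ℂ)‖ + ∫ t in a..b, ‖((deriv u t : ℝ) : ℂ)‖) := by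
        rw [hcancel]
        refine norm_integral_mul_le_of_norm_primitive_le hab ?_
          (Complex.continuous_ofReal.comp_continuousOn hu.continuousOn)
          (fun x hx => (hu.hasDerivAt_of_mem_Ioo hx).ofReal_comp)
          ⟨hu'.1.ofReal, hu'.2.ofReal⟩ fun x hx => ?_
        · have hh_cont := hh.continuousOn
          have hg_cont := hg.continuousOn
          fun_prop
        · have hsub : Icc a x ⊆ Icc a b := Icc_subset_Icc_right hx.2
          exact norm_integral_mul_exp_I_mul_le_two hx.1.le (fun t ht => hhg t (hsub ht))
            (hg.continuousOn.mono hsub)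
    _ ≤ 2 * (1 / A + 2 / A) := by
        simp only [Complex.norm_real, Real.norm_eq_abs]
        gcongr
        exact integral_abs_deriv_inv_le hab.le hA hg.continuousOn hmono hbig
    _ = 6 / A := by ring

/-- Van der Corput lemma for first derivatives: if `h` is C² on `[a,b]` with `h'`
monotone and `|h'| > A > 0` there, and `φ` is C¹ on `[a,b]`, then
`|∫ e^{ih} φ| ≤ c A⁻¹ (|φ(b)| + ∫ |φ'|)` for an absolute constant `c`. -/
theorem stmt_0 :
    ∃ c > (0 : ℝ), ∀ (a b A : ℝ) (h : ℝ → ℝ) (φ : ℝ → ℂ),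
      a < b → 0 < A →
      ContDiffOn ℝ 2 h (Set.Icc a b) →
      (MonotoneOn (deriv h) (Set.Icc a b) ∨ AntitoneOn (deriv h) (Set.Icc a b)) →
      (∀ x ∈ Set.Icc a b, A < |deriv h x|) →
      ContDiffOn ℝ 1 φ (Set.Icc a b) →
      ‖∫ x in a..b, Complex.exp (Complex.I * (h x : ℂ)) * φ x‖ ≤
        c * A⁻¹ * (‖φ b‖ + ∫ x in a..b, ‖deriv φ x‖) := by
  refine ⟨6, by norm_num, fun a b A h φ hab hA hh hmono hbig hφ => ?_⟩
  have hprim : ∀ x ∈ Ioc a b, ‖∫ t in a..x, Complex.exp (Complex.I * (h t : ℂ))‖ ≤ 6 / A :=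
    fun x hx =>
      have hsub : Icc a x ⊆ Icc a b := Icc_subset_Icc_right hx.2
      norm_integral_exp_I_mul_le hx.1 hA (hh.mono hsub)
        (hmono.imp (·.mono hsub) (·.mono hsub)) fun t ht => hbig t (hsub ht)
  have hh_cont := hh.continuousOn
  calc ‖∫ x in a..b, Complex.exp (Complex.I * (h x : ℂ)) * φ x‖
      ≤ 6 / A * (‖φ b‖ + ∫ x in a..b, ‖deriv φ x‖) :=
        norm_integral_mul_le_of_norm_primitive_le hab (by fun_prop) hφ.continuousOn
          (fun x hx => hφ.hasDerivAt_of_mem_Ioo hx) (hφ.intervalIntegrable_deriv hab) hprim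
    _ = 6 * A⁻¹ * (‖φ b‖ + ∫ x in a..b, ‖deriv φ x‖) := by ring
end

section
/- Let h be a C² function on [a,b] with |h'(x)| > A > 0 on [a,b] and |h''(x)| < B·A/(b-a) on [a,b] for some B > 0, and let φ be C¹ on [a,b]. Then |∫_a^b e^{ih(x)} φ(x) dx| ≤ A^{-1}·(∫_a^b |φ'(x)| dx + (B+2)·sup_{[a,b]}|φ|). -/
/-!
Integrate by parts against `d(-i e^{ih}) = h' e^{ih} dx` with amplitude `u = φ / h'`:
the boundary terms are at most `2 sup |φ| / A`, and `u' = φ' / h' - φ h'' / h'^2` satisfies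
`|u'| ≤ |φ'| / A + sup |φ| · B / (A (b - a))`, which integrates to `A⁻¹ (∫ |φ'| + B sup |φ|)`.
-/

open MeasureTheory intervalIntegral Set Complex

theorem IsCompact.le_ciSup_of_continuousOn {X α : Type*} [TopologicalSpace X]
    [ConditionallyCompleteLinearOrder α] [TopologicalSpace α] [ClosedIciTopology α]
    {s : Set X} (hs : IsCompact s) {f : X → α} (hf : ContinuousOn f s) {x : X} (hx : x ∈ s) :
    f x ≤ ⨆ y : s, f y :=
  haveI : Nonempty α := ⟨f x⟩
  le_ciSup (image_eq_range f s ▸ hs.bddAbove_image hf) ⟨x, hx⟩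

theorem HasDerivWithinAt.neg_I_mul_cexp_I_mul {h : ℝ → ℝ} {h' x : ℝ} {s : Set ℝ}
    (hh : HasDerivWithinAt h h' s x) :
    HasDerivWithinAt (fun y ↦ -I * cexp (I * h y)) (cexp (I * h x) * h') s x :=
  ((hh.ofReal_comp.const_mul I).cexp.const_mul (-I)).congr_deriv <| by
    linear_combination -(cexp (I * h x) * h') * I_sq

theorem intervalIntegral.integral_le_mul_integral_add_of_le_Ioo {a b c K : ℝ} (hab : a ≤ b)
    {f g : ℝ → ℝ} (hf : IntervalIntegrable f volume a b) (hg : IntervalIntegrable g volume a b)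
    (hfg : ∀ x ∈ Ioo a b, f x ≤ c * g x + K) :
    ∫ x in a..b, f x ≤ c * (∫ x in a..b, g x) + (b - a) * K := by
  have hcg : IntervalIntegrable (fun x ↦ c * g x) volume a b := hg.const_mul c
  calc ∫ x in a..b, f x ≤ ∫ x in a..b, (c * g x + K) :=
        integral_mono_on_of_le_Ioo hab hf (hcg.add intervalIntegrable_const) hfg
    _ = c * (∫ x in a..b, g x) + (b - a) * K := by
        rw [integral_add hcg intervalIntegrable_const, intervalIntegral.integral_const_mul,
          intervalIntegral.integral_const, smul_eq_mul]

theorem norm_integral_mul_deriv_le {E : Type*} [NormedRing E] [NormedAlgebra ℝ E]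
    [CompleteSpace E] {a b : ℝ} (hab : a ≤ b) {u u' v v' : ℝ → E}
    (hu : ∀ x ∈ Icc a b, HasDerivWithinAt u (u' x) (Icc a b) x)
    (hv : ∀ x ∈ Icc a b, HasDerivWithinAt v (v' x) (Icc a b) x)
    (hu' : IntervalIntegrable u' volume a b) (hv' : IntervalIntegrable v' volume a b)
    (hv_le : ∀ x ∈ Icc a b, ‖v x‖ ≤ 1) :
    ‖∫ x in a..b, u x * v' x‖ ≤ ‖u a‖ + ‖u b‖ + ∫ x in a..b, ‖u' x‖ := by
  have hvc : ContinuousOn v (uIcc a b) :=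
    uIcc_of_le hab ▸ fun x hx ↦ (hv x hx).continuousWithinAt
  have hmul_le (w : E) {x : ℝ} (hx : x ∈ Icc a b) : ‖w * v x‖ ≤ ‖w‖ :=
    (norm_mul_le _ _).trans (mul_le_of_le_one_right (norm_nonneg _) (hv_le x hx))
  have hboundary : ‖u b * v b - u a * v a‖ ≤ ‖u a‖ + ‖u b‖ :=
    calc _ ≤ ‖u b * v b‖ + ‖u a * v a‖ := norm_sub_le _ _
      _ ≤ ‖u b‖ + ‖u a‖ :=
          add_le_add (hmul_le _ (right_mem_Icc.2 hab)) (hmul_le _ (left_mem_Icc.2 hab))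
      _ = ‖u a‖ + ‖u b‖ := add_comm _ _
  have hbulk : ‖∫ x in a..b, u' x * v x‖ ≤ ∫ x in a..b, ‖u' x‖ :=
    (intervalIntegral.norm_integral_le_integral_norm hab).trans <|
      integral_mono_on hab (hu'.mul_continuousOn hvc).norm hu'.norm fun x hx ↦ hmul_le _ hx
  rw [← uIcc_of_le hab] at hu hv
  rw [integral_mul_deriv_eq_deriv_mul_of_hasDerivWithinAt hu hv hu' hv']
  exact (norm_sub_le _ _).trans (add_le_add hboundary hbulk)

theorem norm_mul_inv_add_mul_neg_div_sq_le {z w : ℂ} {t t' A C M : ℝ} (hA : 0 < A)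
    (ht : A ≤ |t|) (ht' : |t'| ≤ C) (hz : ‖z‖ ≤ M) :
    ‖w * (t⁻¹ : ℝ) + z * (-t' / t ^ 2 : ℝ)‖ ≤ A⁻¹ * ‖w‖ + C / A ^ 2 * M :=
  calc _ ≤ ‖w‖ * |t|⁻¹ + ‖z‖ * (|t'| / |t| ^ 2) := by
        refine (norm_add_le _ _).trans_eq ?_
        simp only [norm_mul, norm_real, Real.norm_eq_abs, abs_inv, abs_div, abs_neg, abs_pow]
    _ ≤ ‖w‖ * A⁻¹ + M * (C / A ^ 2) := by
        gcongr
        exacts [(norm_nonneg _).trans hz, (abs_nonneg _).trans ht']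
    _ = A⁻¹ * ‖w‖ + C / A ^ 2 * M := by ring

theorem norm_integral_cexp_I_mul_mul_le {a b A C M : ℝ} (hab : a ≤ b) (hA : 0 < A)
    {h g g' : ℝ → ℝ} {φ ψ : ℝ → ℂ}
    (hh : ∀ x ∈ Icc a b, HasDerivWithinAt h (g x) (Icc a b) x)
    (hg : ∀ x ∈ Icc a b, HasDerivWithinAt g (g' x) (Icc a b) x)
    (hφ : ∀ x ∈ Icc a b, HasDerivWithinAt φ (ψ x) (Icc a b) x)
    (hg' : ContinuousOn g' (Icc a b)) (hψ : ContinuousOn ψ (Icc a b))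
    (hgA : ∀ x ∈ Icc a b, A ≤ |g x|) (hg'C : ∀ x ∈ Ioo a b, |g' x| ≤ C)
    (hφM : ∀ x ∈ Icc a b, ‖φ x‖ ≤ M) :
    ‖∫ x in a..b, cexp (I * h x) * φ x‖ ≤
      A⁻¹ * ((∫ x in a..b, ‖ψ x‖) + (C * (b - a) / A + 2) * M) := by
  have hg0 (x) (hx : x ∈ Icc a b) : g x ≠ 0 := abs_pos.1 (hA.trans_le (hgA x hx))
  have hgc : ContinuousOn g (Icc a b) := fun x hx ↦ (hg x hx).continuousWithinAt
  have hφc : ContinuousOn φ (Icc a b) := fun x hx ↦ (hφ x hx).continuousWithinAt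
  set u : ℝ → ℂ := fun x ↦ φ x * ((g x)⁻¹ : ℝ)
  set u' : ℝ → ℂ := fun x ↦ ψ x * ((g x)⁻¹ : ℝ) + φ x * ((-g' x / g x ^ 2 : ℝ))
  have hu (x) (hx : x ∈ Icc a b) : HasDerivWithinAt u (u' x) (Icc a b) x :=
    (hφ x hx).mul ((hg x hx).inv (hg0 x hx)).ofReal_comp
  have hu' : IntervalIntegrable u' volume a b := by
    have hg2 : ContinuousOn (fun x ↦ -g' x / g x ^ 2) (Icc a b) :=
      hg'.neg.div (hgc.pow 2) fun x hx ↦ pow_ne_zero 2 (hg0 x hx)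
    exact ContinuousOn.intervalIntegrable_of_Icc hab <|
      (hψ.mul (continuous_ofReal.comp_continuousOn (hgc.inv₀ hg0))).add
        (hφc.mul (continuous_ofReal.comp_continuousOn hg2))
  have hv' : IntervalIntegrable (fun x ↦ cexp (I * h x) * g x) volume a b := by
    have hhc : ContinuousOn h (Icc a b) := fun x hx ↦ (hh x hx).continuousWithinAt
    exact ContinuousOn.intervalIntegrable_of_Icc hab (by fun_prop)
  have hu_le (x) (hx : x ∈ Icc a b) : ‖u x‖ ≤ A⁻¹ * M := by
    simp only [u, norm_mul, norm_real, norm_inv, Real.norm_eq_abs]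
    rw [mul_comm]
    gcongr
    exacts [hgA x hx, hφM x hx]
  have hu'_int : ∫ x in a..b, ‖u' x‖ ≤ A⁻¹ * (∫ x in a..b, ‖ψ x‖) + (b - a) * (C / A ^ 2 * M) :=
    integral_le_mul_integral_add_of_le_Ioo hab hu'.norm (hψ.intervalIntegrable_of_Icc hab).norm
      fun x hx ↦ norm_mul_inv_add_mul_neg_div_sq_le hA (hgA x (Ioo_subset_Icc_self hx))
        (hg'C x hx) (hφM x (Ioo_subset_Icc_self hx))
  have heq : ∫ x in a..b, cexp (I * h x) * φ x = ∫ x in a..b, u x * (cexp (I * h x) * g x) := by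
    refine integral_congr fun x hx ↦ ?_
    rw [uIcc_of_le hab] at hx
    simp only [u, ofReal_inv]
    field_simp [ofReal_ne_zero.2 (hg0 x hx)]
  rw [heq]
  refine (norm_integral_mul_deriv_le hab hu (fun x hx ↦ (hh x hx).neg_I_mul_cexp_I_mul) hu' hv'
    fun x _ ↦ by simp [norm_exp]).trans ?_
  calc _ ≤ A⁻¹ * M + A⁻¹ * M + (A⁻¹ * (∫ x in a..b, ‖ψ x‖) + (b - a) * (C / A ^ 2 * M)) :=
        add_le_add (add_le_add (hu_le a (left_mem_Icc.2 hab)) (hu_le b (right_mem_Icc.2 hab)))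
          hu'_int
    _ = A⁻¹ * ((∫ x in a..b, ‖ψ x‖) + (C * (b - a) / A + 2) * M) := by ring

theorem stmt_1_general (a b A B : ℝ) (h : ℝ → ℝ) (φ : ℝ → ℂ)
    (hab : a < b) (hA : 0 < A)
    (hh : ContDiffOn ℝ 2 h (Set.Icc a b))
    (hh' : ∀ x ∈ Set.Icc a b, A < |deriv h x|)
    (hh'' : ∀ x ∈ Set.Icc a b, |deriv (deriv h) x| < B * A / (b - a))
    (hφ : ContDiffOn ℝ 1 φ (Set.Icc a b)) :
    ‖∫ x in a..b, Complex.exp (Complex.I * (h x : ℂ)) * φ x‖ ≤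
      A⁻¹ * ((∫ x in a..b, ‖deriv φ x‖) +
        (B + 2) * ⨆ x : Set.Icc a b, ‖φ x.1‖) := by
  have hs : UniqueDiffOn ℝ (Icc a b) := uniqueDiffOn_Icc hab
  have hg : ContDiffOn ℝ 1 (derivWithin h (Icc a b)) (Icc a b) := hh.derivWithin hs (by norm_num)
  -- `deriv h x ≠ 0` forces differentiability at `x`, endpoints included
  have hg_eq (x) (hx : x ∈ Icc a b) : derivWithin h (Icc a b) x = deriv h x :=
    (differentiableAt_of_deriv_ne_zero (abs_pos.1 (hA.trans (hh' x hx)))).derivWithin (hs x hx)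
  have hg'_eq (x) (hx : x ∈ Ioo a b) :
      derivWithin (derivWithin h (Icc a b)) (Icc a b) x = deriv (deriv h) x := by
    rw [derivWithin_of_mem_nhds (Icc_mem_nhds hx.1 hx.2)]
    exact (Filter.eventuallyEq_of_mem (Icc_mem_nhds hx.1 hx.2) hg_eq).deriv_eq
  have hψ_eq : ∫ x in a..b, ‖deriv φ x‖ = ∫ x in a..b, ‖derivWithin φ (Icc a b) x‖ :=
    integral_congr_Ioo_of_le hab.le fun x hx ↦ by
      rw [derivWithin_of_mem_nhds (Icc_mem_nhds hx.1 hx.2)]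
  have hCB : B * A / (b - a) * (b - a) / A = B := by
    field_simp [sub_ne_zero.2 hab.ne']
  rw [hψ_eq, ← hCB]
  exact norm_integral_cexp_I_mul_mul_le hab.le hA
    (fun x hx ↦ (hh.differentiableOn (by norm_num) x hx).hasDerivWithinAt)
    (fun x hx ↦ (hg.differentiableOn one_ne_zero x hx).hasDerivWithinAt)
    (fun x hx ↦ (hφ.differentiableOn one_ne_zero x hx).hasDerivWithinAt)
    (hg.continuousOn_derivWithin hs le_rfl) (hφ.continuousOn_derivWithin hs le_rfl)
    (fun x hx ↦ hg_eq x hx ▸ (hh' x hx).le)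
    (fun x hx ↦ hg'_eq x hx ▸ (hh'' x (Ioo_subset_Icc_self hx)).le)
    (fun x hx ↦ isCompact_Icc.le_ciSup_of_continuousOn hφ.continuousOn.norm hx)

/-- Variant of the first-derivative Van der Corput lemma (Lemma 2.2): if `|h'| > A > 0`
and `|h''| < B·A/(b-a)` on `[a,b]`, then
`|∫ e^{ih} φ| ≤ A⁻¹ (∫ |φ'| + (B+2)·sup |φ|)`. -/
theorem stmt_1 (a b A B : ℝ) (h : ℝ → ℝ) (φ : ℝ → ℂ)
    (hab : a < b) (hA : 0 < A) (hB : 0 < B)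
    (hh : ContDiffOn ℝ 2 h (Set.Icc a b))
    (hh' : ∀ x ∈ Set.Icc a b, A < |deriv h x|)
    (hh'' : ∀ x ∈ Set.Icc a b, |deriv (deriv h) x| < B * A / (b - a))
    (hφ : ContDiffOn ℝ 1 φ (Set.Icc a b)) :
    ‖∫ x in a..b, Complex.exp (Complex.I * (h x : ℂ)) * φ x‖ ≤
      A⁻¹ * ((∫ x in a..b, ‖deriv φ x‖) +
        (B + 2) * ⨆ x : Set.Icc a b, ‖φ x.1‖) :=
  stmt_1_general a b A B h φ hab hA hh hh' hh'' hφ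
end

section
/- Suppose μ is a finite measure on E, f: E → ℝ is measurable, and there exist ε with 0 < ε < 1/3, l ≥ 0, and C > 0 such that μ({x ∈ E : |f(x)| < t}) ≤ C·t^ε·|ln t|^l for all 0 < t < 1/2. Then there is a constant C' such that for all λ ≥ 2, ∫_E min(1, (λ·|f(x)|)^{-1/3}) dμ ≤ C'·λ^{-ε}·(ln λ)^l. -/
/-!
Split `E` according to the dyadic size of `λ|f|`: where `2^(k-1) ≤ λ|f| < 2^k` the integrand is at
most `2^(-(k-1)/3)`, and where `λ|f| ≥ λ/4` it is `O(λ^(-1/3))`. Hence the integral is bounded by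
`∑_{2^(k+1) ≤ λ} 2^(-(k-1)/3) μ{|f| < 2^k/λ} + O(μ(E) λ^(-1/3))`. The sublevel estimate bounds the
`k`-th term by `λ^(-ε) (ln λ)^l` times `2^(k(ε-1/3))`, a convergent geometric series as `ε < 1/3`.
-/

open MeasureTheory Real Finset

lemma abs_log_div_le_log {a lam : ℝ} (ha : 1 ≤ a) (hlam : a ≤ lam) :
    |log (a / lam)| ≤ log lam := by
  have ha0 : 0 < a := by linarith
  rw [log_div ha0.ne' (by linarith), abs_sub_comm,
    abs_of_nonneg (sub_nonneg.mpr (log_le_log ha0 hlam))]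
  linarith [log_nonneg ha]

section Dyadic

variable {p : ℝ}

lemma min_one_rpow_neg_le_dyadic_sum (hp : 0 ≤ p) (s : ℝ) (J : ℕ) :
    min 1 (s ^ (-p)) ≤
      ∑ k ∈ range J, (if s < 2 ^ k then ((2 : ℝ) ^ k / 2) ^ (-p) else 0) +
        ((2 : ℝ) ^ J / 2) ^ (-p) := by
  induction J with
  | zero =>
    simp only [range_zero, sum_empty, zero_add, pow_zero]
    exact (min_le_left _ _).trans
      (one_le_rpow_of_pos_of_le_one_of_nonpos (by norm_num) (by norm_num) (by linarith))
  | succ J ih =>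
    rw [sum_range_succ]
    have hnext : 0 ≤ ((2 : ℝ) ^ (J + 1) / 2) ^ (-p) := by positivity
    by_cases hs : s < 2 ^ J
    · rw [if_pos hs]
      linarith
    · rw [if_neg hs, pow_succ, mul_div_cancel_right₀ _ two_ne_zero]
      have hsum : 0 ≤ ∑ k ∈ range J, (if s < 2 ^ k then ((2 : ℝ) ^ k / 2) ^ (-p) else 0) :=
        sum_nonneg fun k _ => by split_ifs <;> positivity
      have : s ^ (-p) ≤ ((2 : ℝ) ^ J) ^ (-p) :=
        rpow_le_rpow_of_nonpos (by positivity) (not_lt.mp hs) (by linarith)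
      linarith [min_le_right 1 (s ^ (-p))]

lemma integral_min_one_rpow_neg_le_dyadic_sum {α : Type*} [MeasurableSpace α] (μ : Measure α)
    [IsFiniteMeasure μ] {g : α → ℝ} (hg : Measurable g) (hg0 : 0 ≤ g) (hp : 0 ≤ p) (J : ℕ) :
    ∫ x, min 1 (g x ^ (-p)) ∂μ ≤
      ∑ k ∈ range J, μ.real {x | g x < 2 ^ k} * ((2 : ℝ) ^ k / 2) ^ (-p) +
        μ.real Set.univ * ((2 : ℝ) ^ J / 2) ^ (-p) := by
  have hsets : ∀ k : ℕ, MeasurableSet {x | g x < 2 ^ k} :=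
    fun k => measurableSet_lt hg measurable_const
  have hind : ∀ k ∈ range J,
      Integrable ({x | g x < 2 ^ k}.indicator fun _ => ((2 : ℝ) ^ k / 2) ^ (-p)) μ :=
    fun k _ => (integrable_const _).indicator (hsets k)
  have hmin : Integrable (fun x => min 1 (g x ^ (-p))) μ := by
    refine (integrable_const (1 : ℝ)).mono'
      (measurable_const.min (hg.pow_const _)).aestronglyMeasurable (ae_of_all _ fun x => ?_)
    rw [norm_of_nonneg (le_min zero_le_one (rpow_nonneg (hg0 x) _))]
    exact min_le_left _ _
  calc ∫ x, min 1 (g x ^ (-p)) ∂μ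
      ≤ ∫ x, (∑ k ∈ range J, {x | g x < 2 ^ k}.indicator (fun _ => ((2 : ℝ) ^ k / 2) ^ (-p)) x +
          ((2 : ℝ) ^ J / 2) ^ (-p)) ∂μ := by
        refine integral_mono hmin ((integrable_finsetSum _ hind).add (integrable_const _))
          fun x => ?_
        simpa only [Set.indicator_apply, Set.mem_ofPred_eq]
          using min_one_rpow_neg_le_dyadic_sum hp (g x) J
    _ = _ := by
        rw [integral_add (integrable_finsetSum _ hind) (integrable_const _),
          integral_finsetSum _ hind, integral_const, smul_eq_mul]
        simp only [integral_indicator_const _ (hsets _), smul_eq_mul]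

lemma rpow_div_mul_rpow_half_neg {ε lam : ℝ} (hlam : 0 < lam) (k : ℕ) :
    ((2 : ℝ) ^ k / lam) ^ ε * ((2 : ℝ) ^ k / 2) ^ (-p) =
      2 ^ p * lam ^ (-ε) * ((2 : ℝ) ^ (ε - p)) ^ k := by
  rw [div_rpow (by positivity) hlam.le, div_rpow (by positivity) zero_le_two, rpow_neg hlam.le,
    rpow_neg zero_le_two, ← rpow_natCast, ← rpow_mul zero_le_two, ← rpow_mul zero_le_two,
    ← rpow_mul_natCast zero_le_two, show (ε - p) * k = k * ε + k * -p by ring, rpow_add two_pos,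
    div_inv_eq_mul]
  ring

lemma sum_dyadic_sublevel_le {α : Type*} [MeasurableSpace α] (μ : Measure α) (f : α → ℝ)
    {ε C : ℝ} {l : ℕ} (hC : 0 ≤ C) (hεp : ε < p)
    (hlev : ∀ t : ℝ, 0 < t → t < 1 / 2 →
      (μ {x | |f x| < t}).toReal ≤ C * t ^ ε * |log t| ^ l)
    {lam : ℝ} {J : ℕ} (hJ : 2 ^ (J + 1) ≤ lam) :
    ∑ k ∈ range J, μ.real {x | lam * |f x| < 2 ^ k} * ((2 : ℝ) ^ k / 2) ^ (-p) ≤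
      C * 2 ^ p / (1 - 2 ^ (ε - p)) * lam ^ (-ε) * log lam ^ l := by
  set q : ℝ := 2 ^ (ε - p)
  have hq : q < 1 := rpow_lt_one_of_one_lt_of_neg one_lt_two (by linarith)
  have hlam : 0 < lam := lt_of_lt_of_le (by positivity) hJ
  have hterm : ∀ k ∈ range J, μ.real {x | lam * |f x| < 2 ^ k} * ((2 : ℝ) ^ k / 2) ^ (-p) ≤
      C * 2 ^ p * lam ^ (-ε) * log lam ^ l * q ^ k := by
    intro k hk
    have hkJ : (2 : ℝ) ^ k * 2 ≤ 2 ^ J := by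
      rw [← pow_succ]; exact pow_le_pow_right₀ one_le_two (mem_range.mp hk)
    have hk_lt : (2 : ℝ) ^ k * 2 < lam := by
      rw [pow_succ] at hJ; linarith [pow_pos (two_pos (α := ℝ)) J]
    have hset : {x | lam * |f x| < 2 ^ k} = {x | |f x| < 2 ^ k / lam} := by
      ext x; exact (lt_div_iff₀' hlam).symm
    have hmeas := hlev (2 ^ k / lam) (by positivity) (by
      rw [div_lt_iff₀ hlam]; linarith)
    have hlog : |log ((2 : ℝ) ^ k / lam)| ^ l ≤ log lam ^ l :=
      pow_le_pow_left₀ (abs_nonneg _)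
        (abs_log_div_le_log (one_le_pow₀ one_le_two) (by linarith [pow_pos (two_pos (α := ℝ)) k])) l
    calc μ.real {x | lam * |f x| < 2 ^ k} * ((2 : ℝ) ^ k / 2) ^ (-p)
        ≤ C * ((2 : ℝ) ^ k / lam) ^ ε * log lam ^ l * ((2 : ℝ) ^ k / 2) ^ (-p) := by
          rw [hset, measureReal_def]
          gcongr
          exact hmeas.trans (by gcongr)
      _ = C * log lam ^ l * (((2 : ℝ) ^ k / lam) ^ ε * ((2 : ℝ) ^ k / 2) ^ (-p)) := by ring
      _ = C * 2 ^ p * lam ^ (-ε) * log lam ^ l * q ^ k := by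
          rw [rpow_div_mul_rpow_half_neg hlam]; ring
  have hgeom : ∑ k ∈ range J, q ^ k ≤ 1 / (1 - q) := by
    simpa using geom_sum_Ico_le_of_lt_one (m := 0) (n := J) (by positivity) hq
  have hlog : 0 ≤ log lam ^ l :=
    pow_nonneg (log_nonneg ((one_le_pow₀ one_le_two).trans hJ)) l
  calc _ ≤ ∑ k ∈ range J, C * 2 ^ p * lam ^ (-ε) * log lam ^ l * q ^ k := sum_le_sum hterm
    _ = C * 2 ^ p * lam ^ (-ε) * log lam ^ l * ∑ k ∈ range J, q ^ k := by rw [mul_sum]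
    _ ≤ C * 2 ^ p * lam ^ (-ε) * log lam ^ l * (1 / (1 - q)) := by gcongr
    _ = _ := by ring

lemma half_two_pow_rpow_neg_le {ε lam : ℝ} {l J : ℕ} (hp : 0 ≤ p) (hεp : ε ≤ p)
    (hlam : 2 ≤ lam) (hJ : lam < 2 ^ (J + 2)) :
    ((2 : ℝ) ^ J / 2) ^ (-p) ≤ 8 ^ p / log 2 ^ l * lam ^ (-ε) * log lam ^ l := by
  have hlam0 : 0 < lam := by linarith
  have hlog2 : 0 < log 2 := log_pos one_lt_two
  have hloglam : log 2 ^ l ≤ log lam ^ l := pow_le_pow_left₀ hlog2.le (log_le_log two_pos hlam) l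
  calc ((2 : ℝ) ^ J / 2) ^ (-p) ≤ (lam / 8) ^ (-p) := by
        refine rpow_le_rpow_of_nonpos (by positivity) ?_ (by linarith)
        rw [pow_add] at hJ; linarith
    _ = 8 ^ p * lam ^ (-p) := by
        rw [div_rpow hlam0.le (by norm_num), rpow_neg (by norm_num : (0 : ℝ) ≤ 8),
          div_inv_eq_mul, mul_comm]
    _ ≤ 8 ^ p * lam ^ (-ε) :=
        mul_le_mul_of_nonneg_left
          (rpow_le_rpow_of_exponent_le (by linarith) (neg_le_neg hεp)) (by positivity)
    _ ≤ 8 ^ p / log 2 ^ l * lam ^ (-ε) * log lam ^ l := by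
        rw [div_mul_eq_mul_div, div_mul_eq_mul_div, le_div_iff₀ (by positivity)]
        gcongr

end Dyadic

theorem stmt_4_general {α : Type*} [MeasurableSpace α] (μ : Measure α) [IsFiniteMeasure μ]
    (f : α → ℝ) (hf : Measurable f) (ε : ℝ) (l : ℕ) (C : ℝ)
    (hε' : ε < 1 / 3) (hC : 0 < C)
    (hlev : ∀ t : ℝ, 0 < t → t < 1 / 2 →
      (μ {x | |f x| < t}).toReal ≤ C * t ^ ε * |Real.log t| ^ l) :
    ∃ C' > (0 : ℝ), ∀ lam : ℝ, 2 ≤ lam →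
      (∫ x, min 1 ((lam * |f x|) ^ (-(1 / 3 : ℝ))) ∂μ) ≤
        C' * lam ^ (-ε) * (Real.log lam) ^ l := by
  have hq : 0 < 1 - (2 : ℝ) ^ (ε - 1 / 3) :=
    sub_pos.mpr (rpow_lt_one_of_one_lt_of_neg one_lt_two (by linarith))
  refine ⟨C * 2 ^ (1 / 3 : ℝ) / (1 - 2 ^ (ε - 1 / 3)) +
    μ.real Set.univ * (8 ^ (1 / 3 : ℝ) / log 2 ^ l), by positivity, fun lam hlam => ?_⟩
  obtain ⟨J, hJ, hJ'⟩ := exists_nat_pow_near (x := lam / 2) (by linarith) one_lt_two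
  rw [le_div_iff₀' two_pos, ← pow_succ'] at hJ
  rw [div_lt_iff₀ two_pos, ← pow_succ] at hJ'
  calc ∫ x, min 1 ((lam * |f x|) ^ (-(1 / 3 : ℝ))) ∂μ
      ≤ ∑ k ∈ range J, μ.real {x | lam * |f x| < 2 ^ k} * ((2 : ℝ) ^ k / 2) ^ (-(1 / 3 : ℝ)) +
          μ.real Set.univ * ((2 : ℝ) ^ J / 2) ^ (-(1 / 3 : ℝ)) :=
        integral_min_one_rpow_neg_le_dyadic_sum μ (by fun_prop)
          (fun x => by positivity) (by norm_num) J
    _ ≤ C * 2 ^ (1 / 3 : ℝ) / (1 - 2 ^ (ε - 1 / 3)) * lam ^ (-ε) * log lam ^ l +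
          μ.real Set.univ * (8 ^ (1 / 3 : ℝ) / log 2 ^ l * lam ^ (-ε) * log lam ^ l) :=
        add_le_add (sum_dyadic_sublevel_le μ f hC.le hε' hlev hJ)
          (mul_le_mul_of_nonneg_left
            (half_two_pow_rpow_neg_le (by norm_num) hε'.le hlam hJ') measureReal_nonneg)
    _ = _ := by ring

/-- Key computation (5.7)-(5.11) for ε < 1/3: a sublevel set estimate
`μ({|f| < t}) ≤ C t^ε |ln t|^l` implies
`∫ min(1, (λ|f|)^{-1/3}) dμ ≤ C' λ^{-ε} (ln λ)^l` for λ ≥ 2. -/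
theorem stmt_4 {α : Type*} [MeasurableSpace α] (μ : Measure α) [IsFiniteMeasure μ]
    (f : α → ℝ) (hf : Measurable f) (ε : ℝ) (l : ℕ) (C : ℝ)
    (hε : 0 < ε) (hε' : ε < 1 / 3) (hC : 0 < C)
    (hlev : ∀ t : ℝ, 0 < t → t < 1 / 2 →
      (μ {x | |f x| < t}).toReal ≤ C * t ^ ε * |Real.log t| ^ l) :
    ∃ C' > (0 : ℝ), ∀ lam : ℝ, 2 ≤ lam →
      (∫ x, min 1 ((lam * |f x|) ^ (-(1 / 3 : ℝ))) ∂μ) ≤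
        C' * lam ^ (-ε) * (Real.log lam) ^ l :=
  stmt_4_general μ f hf ε l C hε' hC hlev
end

section
/- Suppose μ is a finite measure on E, f: E → ℝ is measurable, and there exist ε > 1/3 and C > 0 such that μ({x ∈ E : |f(x)| < t}) ≤ C·t^ε for all 0 < t < 1/2. Then there is a constant C' such that for all λ ≥ 2, ∫_E min(1, (λ·|f(x)|)^{-1/3}) dμ ≤ C'·λ^{-1/3}. -/
/-!
Since `|f| ^ (-1/3) > s` forces `|f| < s ^ (-3)`, the sublevel estimate makes the distribution
function of `|f| ^ (-1/3)` decay like `s ^ (-3ε)`, which is integrable at infinity because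
`3ε > 1`; by the layer cake formula `|f| ^ (-1/3)` is therefore integrable. The integrand is
bounded pointwise by `λ ^ (-1/3) * |f| ^ (-1/3)`, so `C' = ∫ |f| ^ (-1/3) dμ` (plus one, to make
it positive) works.
-/

open MeasureTheory Set

lemma Real.lt_rpow_neg_inv_of_lt_rpow_neg {y t p : ℝ} (hy : 0 ≤ y) (ht : 0 < t) (hp : 0 < p)
    (h : t < y ^ (-p)) : y < t ^ (-p⁻¹) := by
  have hy0 : y ≠ 0 := by
    rintro rfl
    rw [Real.zero_rpow (neg_ne_zero.2 hp.ne')] at h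
    exact h.not_gt ht
  calc y = (y ^ (-p)) ^ (-p⁻¹) := by
        rw [← Real.rpow_mul hy, neg_mul_neg, mul_inv_cancel₀ hp.ne', Real.rpow_one]
    _ < t ^ (-p⁻¹) := Real.rpow_lt_rpow_of_neg ht h (neg_neg_of_pos (inv_pos.2 hp))

theorem integrable_abs_rpow_neg_of_measure_abs_lt_le {α : Type*} [MeasurableSpace α]
    {μ : Measure α} [IsFiniteMeasure μ] {f : α → ℝ} (hf : AEMeasurable f μ) {ε C t₀ p : ℝ}
    (hp : 0 < p) (hpε : p < ε) (ht₀ : 0 < t₀)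
    (hlev : ∀ t : ℝ, 0 < t → t < t₀ → (μ {x | |f x| < t}).toReal ≤ C * t ^ ε) :
    Integrable (fun x => |f x| ^ (-p)) μ := by
  have g_nn : 0 ≤ᵐ[μ] fun x => |f x| ^ (-p) :=
    Filter.Eventually.of_forall fun x => Real.rpow_nonneg (abs_nonneg _) _
  have g_meas : AEMeasurable (fun x => |f x| ^ (-p)) μ := hf.abs.pow_const _
  refine ⟨g_meas.aestronglyMeasurable, (hasFiniteIntegral_iff_ofReal g_nn).2 ?_⟩
  rw [lintegral_eq_lintegral_meas_lt μ g_nn g_meas]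
  set S := t₀ ^ (-p)
  have hS : 0 < S := Real.rpow_pos_of_pos ht₀ _
  have tail : ∀ t ∈ Ioi S,
      μ {x | t < |f x| ^ (-p)} ≤ ENNReal.ofReal (C * t ^ (-p⁻¹ * ε)) := by
    intro t (hSt : S < t)
    have ht : 0 < t := hS.trans hSt
    have hu : t ^ (-p⁻¹) < t₀ := by
      calc t ^ (-p⁻¹) < S ^ (-p⁻¹) := Real.rpow_lt_rpow_of_neg hS hSt (by simpa using hp)
        _ = t₀ := by
          rw [← Real.rpow_mul ht₀.le, neg_mul_neg, mul_inv_cancel₀ hp.ne', Real.rpow_one]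
    have hlev_t := hlev _ (Real.rpow_pos_of_pos ht _) hu
    calc μ {x | t < |f x| ^ (-p)} ≤ μ {x | |f x| < t ^ (-p⁻¹)} :=
          measure_mono fun x hx => Real.lt_rpow_neg_inv_of_lt_rpow_neg (abs_nonneg _) ht hp hx
      _ ≤ ENNReal.ofReal (C * (t ^ (-p⁻¹)) ^ ε) :=
          (ENNReal.le_ofReal_iff_toReal_le (measure_ne_top _ _)
            (ENNReal.toReal_nonneg.trans hlev_t)).2 hlev_t
      _ = ENNReal.ofReal (C * t ^ (-p⁻¹ * ε)) := by rw [← Real.rpow_mul ht.le]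
  have tail_integrable : IntegrableOn (fun t : ℝ => C * t ^ (-p⁻¹ * ε)) (Ioi S) := by
    refine (integrableOn_Ioi_rpow_of_lt ?_ hS).const_mul C
    rw [neg_mul, neg_lt_neg_iff, inv_mul_eq_div, one_lt_div hp]
    exact hpε
  calc ∫⁻ t in Ioi 0, μ {x | t < |f x| ^ (-p)}
      ≤ (∫⁻ t in Ioc 0 S, μ {x | t < |f x| ^ (-p)}) +
          ∫⁻ t in Ioi S, μ {x | t < |f x| ^ (-p)} := by
        rw [← Ioc_union_Ioi_eq_Ioi hS.le]
        exact lintegral_union_le _ _ _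
    _ ≤ (∫⁻ _ in Ioc 0 S, μ univ) + ∫⁻ t in Ioi S, ENNReal.ofReal (C * t ^ (-p⁻¹ * ε)) :=
        add_le_add (lintegral_mono fun _ => measure_mono (subset_univ _))
          (setLIntegral_mono' measurableSet_Ioi tail)
    _ < ⊤ := by
        rw [setLIntegral_const, Real.volume_Ioc]
        exact ENNReal.add_lt_top.2
          ⟨ENNReal.mul_lt_top (measure_lt_top _ _) ENNReal.ofReal_lt_top,
            tail_integrable.setLIntegral_lt_top⟩

theorem stmt_5_general {α : Type*} [MeasurableSpace α] (μ : Measure α) [IsFiniteMeasure μ]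
    (f : α → ℝ) (hf : Measurable f) (ε C : ℝ)
    (hε : 1 / 3 < ε)
    (hlev : ∀ t : ℝ, 0 < t → t < 1 / 2 → (μ {x | |f x| < t}).toReal ≤ C * t ^ ε) :
    ∃ C' > (0 : ℝ), ∀ lam : ℝ, 2 ≤ lam →
      (∫ x, min 1 ((lam * |f x|) ^ (-(1 / 3 : ℝ))) ∂μ) ≤ C' * lam ^ (-(1 / 3 : ℝ)) := by
  have hint : Integrable (fun x => |f x| ^ (-(1 / 3 : ℝ))) μ :=
    integrable_abs_rpow_neg_of_measure_abs_lt_le hf.aemeasurable (by norm_num) hε (by norm_num)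
      hlev
  have hI : 0 ≤ ∫ x, |f x| ^ (-(1 / 3 : ℝ)) ∂μ :=
    integral_nonneg fun x => Real.rpow_nonneg (abs_nonneg _) _
  refine ⟨(∫ x, |f x| ^ (-(1 / 3 : ℝ)) ∂μ) + 1, by linarith, fun lam hlam => ?_⟩
  have hlam0 : 0 ≤ lam := by linarith
  calc ∫ x, min 1 ((lam * |f x|) ^ (-(1 / 3 : ℝ))) ∂μ
      ≤ ∫ x, lam ^ (-(1 / 3 : ℝ)) * |f x| ^ (-(1 / 3 : ℝ)) ∂μ :=
        integral_mono_of_nonneg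
          (Filter.Eventually.of_forall fun x =>
            le_min zero_le_one (Real.rpow_nonneg (by positivity) _))
          (hint.const_mul _)
          (Filter.Eventually.of_forall fun x =>
            (min_le_right _ _).trans_eq (Real.mul_rpow hlam0 (abs_nonneg _)))
    _ = lam ^ (-(1 / 3 : ℝ)) * ∫ x, |f x| ^ (-(1 / 3 : ℝ)) ∂μ := integral_const_mul _ _
    _ ≤ ((∫ x, |f x| ^ (-(1 / 3 : ℝ)) ∂μ) + 1) * lam ^ (-(1 / 3 : ℝ)) := by
        rw [mul_comm]
        gcongr
        linarith

/-- The case ε > 1/3 of the computation (5.7)-(5.12): a sublevel set estimate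
`μ({|f| < t}) ≤ C t^ε` with `ε > 1/3` implies
`∫ min(1, (λ|f|)^{-1/3}) dμ ≤ C' λ^{-1/3}` for λ ≥ 2. -/
theorem stmt_5 {α : Type*} [MeasurableSpace α] (μ : Measure α) [IsFiniteMeasure μ]
    (f : α → ℝ) (hf : Measurable f) (ε C : ℝ)
    (hε : 1 / 3 < ε) (hC : 0 < C)
    (hlev : ∀ t : ℝ, 0 < t → t < 1 / 2 → (μ {x | |f x| < t}).toReal ≤ C * t ^ ε) :
    ∃ C' > (0 : ℝ), ∀ lam : ℝ, 2 ≤ lam →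
      (∫ x, min 1 ((lam * |f x|) ^ (-(1 / 3 : ℝ))) ∂μ) ≤ C' * lam ^ (-(1 / 3 : ℝ)) :=
  stmt_5_general μ f hf ε C hε hlev
end

section
/- Let s ≥ 2 be an integer and f(x,y) a real-analytic function near the origin in ℝ² whose Newton polygon has (s,0) as a vertex with all other vertices strictly above the line a + s·b = s. Then there exist s' with 1 < s' < s and a > 0 such that f(x,y) = f_{s,0}x^s + o(x^s) uniformly on the set {(x,y) : 0 < x < a, |y| < x^{s'}}. -/
lemma key_exp_14 (s a b : ℕ) (hs2 : (2:ℝ) ≤ s) (hab : (s:ℝ) + 1 ≤ (a:ℝ) + (s:ℝ) * b) :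
    0 ≤ (a:ℝ) + ((s:ℝ) - 1/2) * b - ((s:ℝ) + 1/2) ∧
    (a:ℝ) + (b:ℝ) - ((s:ℝ) + 1) ≤ (a:ℝ) + ((s:ℝ) - 1/2) * b - ((s:ℝ) + 1/2) := by
  constructor
  · rcases le_or_gt b 1 with hb | hb
    · have hb' : (b:ℝ) ≤ 1 := by exact_mod_cast hb
      have hb0 : (0:ℝ) ≤ b := Nat.cast_nonneg b
      nlinarith
    · have hb2 : (2:ℝ) ≤ b := by exact_mod_cast hb
      have ha0 : (0:ℝ) ≤ a := Nat.cast_nonneg a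
      nlinarith [mul_nonneg (by linarith : (0:ℝ) ≤ (s:ℝ) - 1/2) (by linarith : (0:ℝ) ≤ (b:ℝ) - 2)]
  · nlinarith [mul_nonneg (by linarith : (0:ℝ) ≤ (s:ℝ) - 3/2) (Nat.cast_nonneg b : (0:ℝ) ≤ (b:ℝ))]

lemma key_ineq_14 (s a b : ℕ) (hs2 : (2:ℝ) ≤ s) (hab : (s:ℝ) + 1 ≤ (a:ℝ) + (s:ℝ) * b)
    (x ρ : ℝ) (hx : 0 < x) (hxρ : x ≤ ρ) (hρ1 : ρ ≤ 1) :
    x ^ a * (x ^ ((s:ℝ) - 1/2)) ^ b ≤ ρ ^ a * ρ ^ b * (x ^ ((s:ℝ) + 1/2) / ρ ^ (s+1)) := by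
  have hρ0 : 0 < ρ := lt_of_lt_of_le hx hxρ
  have hx1 : x ≤ 1 := hxρ.trans hρ1
  obtain ⟨hE0, hEF⟩ := key_exp_14 s a b hs2 hab
  have hxEρF : x ^ ((a:ℝ) + ((s:ℝ) - 1/2) * b - ((s:ℝ) + 1/2))
      ≤ ρ ^ ((a:ℝ) + (b:ℝ) - ((s:ℝ) + 1)) := by
    rcases le_or_gt ((a:ℝ) + (b:ℝ) - ((s:ℝ) + 1)) 0 with hFle | hFpos
    · calc x ^ ((a:ℝ) + ((s:ℝ) - 1/2) * b - ((s:ℝ) + 1/2)) ≤ 1 :=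
          Real.rpow_le_one hx.le hx1 hE0
        _ ≤ ρ ^ ((a:ℝ) + (b:ℝ) - ((s:ℝ) + 1)) :=
          Real.one_le_rpow_of_pos_of_le_one_of_nonpos hρ0 hρ1 hFle
    · calc x ^ ((a:ℝ) + ((s:ℝ) - 1/2) * b - ((s:ℝ) + 1/2))
          ≤ x ^ ((a:ℝ) + (b:ℝ) - ((s:ℝ) + 1)) :=
          Real.rpow_le_rpow_of_exponent_ge hx hx1 hEF
        _ ≤ ρ ^ ((a:ℝ) + (b:ℝ) - ((s:ℝ) + 1)) := Real.rpow_le_rpow hx.le hxρ hFpos.le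
  have lhs_eq : x ^ a * (x ^ ((s:ℝ) - 1/2)) ^ b
      = x ^ ((s:ℝ) + 1/2) * x ^ ((a:ℝ) + ((s:ℝ) - 1/2) * b - ((s:ℝ) + 1/2)) := by
    rw [← Real.rpow_natCast x a, ← Real.rpow_natCast (x ^ ((s:ℝ)-1/2)) b,
      ← Real.rpow_mul hx.le, ← Real.rpow_add hx, ← Real.rpow_add hx]
    ring_nf
  have rhs_eq : ρ ^ a * ρ ^ b * (x ^ ((s:ℝ)+1/2) / ρ ^ (s+1))
      = x ^ ((s:ℝ)+1/2) * ρ ^ ((a:ℝ) + (b:ℝ) - ((s:ℝ) + 1)) := by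
    rw [← Real.rpow_natCast ρ a, ← Real.rpow_natCast ρ b, ← Real.rpow_natCast ρ (s+1),
      ← Real.rpow_add hρ0, Real.rpow_sub hρ0]
    push_cast
    ring
  rw [lhs_eq, rhs_eq]
  exact mul_le_mul_of_nonneg_left hxEρF (Real.rpow_nonneg hx.le _)

/-- Conclusion of Lemma 3.4: if `f` is given near the origin by an absolutely convergent
power series `∑ c a b x^a y^b` whose Newton polygon has `(s,0)` as a vertex, with every
other nonzero coefficient satisfying `a + s·b > s`, and `c s 0 ≠ 0`, then
`f(x,y) = c s 0 · x^s + o(x^s)` uniformly on a horn `{0 < x < a, |y| < x^{s'}}`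
for some `1 < s' < s`. -/
theorem stmt_14 (s : ℕ) (hs : 2 ≤ s) (c : ℕ → ℕ → ℝ) (f : ℝ → ℝ → ℝ) (r : ℝ) (hr : 0 < r)
    (hsum : ∀ x y : ℝ, x ^ 2 + y ^ 2 < r ^ 2 →
      Summable (fun p : ℕ × ℕ => |c p.1 p.2| * |x| ^ p.1 * |y| ^ p.2))
    (hf : ∀ x y : ℝ, x ^ 2 + y ^ 2 < r ^ 2 →
      f x y = ∑' p : ℕ × ℕ, c p.1 p.2 * x ^ p.1 * y ^ p.2)
    (hvertex : c s 0 ≠ 0)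
    (hnewton : ∀ a b : ℕ, c a b ≠ 0 → (a, b) ≠ (s, 0) → (s : ℝ) < (a : ℝ) + (s : ℝ) * b) :
    ∃ s' : ℝ, 1 < s' ∧ s' < s ∧
      ∀ ε > (0 : ℝ), ∃ a > (0 : ℝ), ∀ x y : ℝ,
        0 < x → x < a → |y| < x ^ s' →
        |f x y - c s 0 * x ^ s| ≤ ε * x ^ s := by
  have hs2 : (2:ℝ) ≤ (s:ℝ) := by exact_mod_cast hs
  refine ⟨(s:ℝ) - 1/2, by linarith, by linarith, ?_⟩
  intro ε hε
  set ρ : ℝ := min 1 (r/2) with hρdef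
  have hρ0 : 0 < ρ := lt_min one_pos (by linarith)
  have hρ1 : ρ ≤ 1 := min_le_left _ _
  have hρr : ρ ^ 2 + ρ ^ 2 < r ^ 2 := by
    have h2 : ρ ≤ r/2 := min_le_right _ _
    nlinarith
  have hMsum : Summable (fun p : ℕ × ℕ => |c p.1 p.2| * |ρ| ^ p.1 * |ρ| ^ p.2) := hsum ρ ρ hρr
  set M : ℝ := ∑' p : ℕ × ℕ, |c p.1 p.2| * |ρ| ^ p.1 * |ρ| ^ p.2 with hMdef
  have hM0 : 0 ≤ M := tsum_nonneg (fun p => by positivity)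
  have hρs : 0 < ρ ^ (s+1) := pow_pos hρ0 _
  refine ⟨min ρ ((ε * ρ ^ (s+1) / (M+1)) ^ 2), lt_min hρ0 (by positivity), ?_⟩
  intro x y hx hxa hy
  have hxρ : x < ρ := lt_of_lt_of_le hxa (min_le_left _ _)
  have hxK : x < (ε * ρ ^ (s+1) / (M+1)) ^ 2 := lt_of_lt_of_le hxa (min_le_right _ _)
  have hx1 : x ≤ 1 := le_trans hxρ.le hρ1
  have hys : |y| < x := by
    calc |y| < x ^ ((s:ℝ) - 1/2) := hy
      _ ≤ x ^ (1:ℝ) := Real.rpow_le_rpow_of_exponent_ge hx hx1 (by linarith)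
      _ = x := Real.rpow_one x
  have hxy : x ^ 2 + y ^ 2 < r ^ 2 := by
    have hy2 : y ^ 2 < x ^ 2 := by nlinarith [abs_nonneg y, sq_abs y]
    nlinarith
  have habs : Summable (fun p : ℕ × ℕ => |c p.1 p.2| * |x| ^ p.1 * |y| ^ p.2) := hsum x y hxy
  have hsgn : Summable (fun p : ℕ × ℕ => c p.1 p.2 * x ^ p.1 * y ^ p.2) := by
    exact Summable.of_abs (habs.congr fun p => by rw [abs_mul, abs_mul, abs_pow, abs_pow])
  rw [hf x y hxy, Summable.tsum_eq_add_tsum_ite hsgn (s, 0)]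
  simp only [pow_zero, mul_one]
  rw [add_sub_cancel_left]
  set g : ℕ × ℕ → ℝ := fun p => if p = (s, 0) then 0 else c p.1 p.2 * x ^ p.1 * y ^ p.2 with hg
  set h : ℕ × ℕ → ℝ := fun p =>
    (|c p.1 p.2| * |ρ| ^ p.1 * |ρ| ^ p.2) * (x ^ ((s:ℝ) + 1/2) / ρ ^ (s+1)) with hh
  have key : ∀ p : ℕ × ℕ, |g p| ≤ h p := by
    intro p
    by_cases hp : p = (s, 0)
    · simp only [hg, hp, if_pos rfl, abs_zero, hh]
      positivity
    · simp only [hg, if_neg hp, hh]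
      by_cases hc : c p.1 p.2 = 0
      · rw [hc]
        simp only [zero_mul, abs_zero, abs_mul]
        positivity
      · have hnew := hnewton p.1 p.2 hc (by simpa using hp)
        have hn1 : s < p.1 + s * p.2 := by exact_mod_cast hnew
        have hn2 : s + 1 ≤ p.1 + s * p.2 := hn1
        have hab : (s:ℝ) + 1 ≤ (p.1:ℝ) + (s:ℝ) * p.2 := by exact_mod_cast hn2
        have step1 : |c p.1 p.2 * x ^ p.1 * y ^ p.2|
            = |c p.1 p.2| * x ^ p.1 * |y| ^ p.2 := by
          rw [abs_mul, abs_mul, abs_pow, abs_pow, abs_of_pos hx]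
        rw [step1, abs_of_pos hρ0]
        have step2 : |c p.1 p.2| * x ^ p.1 * |y| ^ p.2
            ≤ |c p.1 p.2| * x ^ p.1 * (x ^ ((s:ℝ) - 1/2)) ^ p.2 := by
          have hle := pow_le_pow_left₀ (abs_nonneg y) hy.le p.2
          have hx' : 0 ≤ |c p.1 p.2| * x ^ p.1 := by positivity
          exact mul_le_mul_of_nonneg_left hle hx'
        refine step2.trans ?_
        have hki := key_ineq_14 s p.1 p.2 hs2 hab x ρ hx hxρ.le hρ1
        calc |c p.1 p.2| * x ^ p.1 * (x ^ ((s:ℝ) - 1/2)) ^ p.2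
            = |c p.1 p.2| * (x ^ p.1 * (x ^ ((s:ℝ) - 1/2)) ^ p.2) := by ring
          _ ≤ |c p.1 p.2| * (ρ ^ p.1 * ρ ^ p.2 * (x ^ ((s:ℝ) + 1/2) / ρ ^ (s+1))) :=
            mul_le_mul_of_nonneg_left hki (abs_nonneg _)
          _ = |c p.1 p.2| * ρ ^ p.1 * ρ ^ p.2 * (x ^ ((s:ℝ) + 1/2) / ρ ^ (s+1)) := by ring
  have hhsum : Summable h := hMsum.mul_right _
  have hgabs : Summable (fun p => |g p|) :=
    Summable.of_nonneg_of_le (fun p => abs_nonneg _) key hhsum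
  have h1 : |∑' p, g p| ≤ ∑' p, |g p| := by
    simpa using norm_tsum_le_tsum_norm (by simpa using hgabs : Summable fun p => ‖g p‖)
  have h2 : ∑' p, |g p| ≤ ∑' p, h p := Summable.tsum_le_tsum key hgabs hhsum
  have h3 : ∑' p, h p = M * (x ^ ((s:ℝ) + 1/2) / ρ ^ (s+1)) := tsum_mul_right
  have hxhalf : x ^ ((1:ℝ)/2) < ε * ρ ^ (s+1) / (M+1) := by
    have hK : 0 < ε * ρ ^ (s+1) / (M+1) := by positivity
    calc x ^ ((1:ℝ)/2) < ((ε * ρ ^ (s+1) / (M+1)) ^ 2) ^ ((1:ℝ)/2) :=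
        Real.rpow_lt_rpow hx.le hxK (by norm_num)
      _ = ε * ρ ^ (s+1) / (M+1) := by
        rw [← Real.rpow_natCast (ε * ρ ^ (s+1) / (M+1)) 2, ← Real.rpow_mul hK.le]
        norm_num
  have hsplit : x ^ ((s:ℝ) + 1/2) = x ^ s * x ^ ((1:ℝ)/2) := by
    rw [Real.rpow_add hx, Real.rpow_natCast]
  have hfinal : M * (x ^ ((s:ℝ) + 1/2) / ρ ^ (s+1)) ≤ ε * x ^ s := by
    rw [hsplit]
    have hxs : 0 ≤ x ^ s := by positivity
    have b1 : M * (x ^ s * x ^ ((1:ℝ)/2) / ρ ^ (s+1))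
        ≤ M * (x ^ s * (ε * ρ ^ (s+1) / (M+1)) / ρ ^ (s+1)) := by
      gcongr
    refine b1.trans ?_
    have heq : M * (x ^ s * (ε * ρ ^ (s+1) / (M+1)) / ρ ^ (s+1))
        = (M / (M+1)) * (ε * x ^ s) := by
      field_simp
    rw [heq]
    have hMle : M / (M+1) ≤ 1 := by
      rw [div_le_one (by linarith)]; linarith
    nlinarith [mul_nonneg hε.le hxs]
  calc |∑' p, g p| ≤ ∑' p, |g p| := h1
    _ ≤ ∑' p, h p := h2
    _ = M * (x ^ ((s:ℝ) + 1/2) / ρ ^ (s+1)) := h3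
    _ ≤ ε * x ^ s := hfinal
end

section
/- Let g be a nonnegative measurable function on a disk D ⊂ ℝ² and suppose for a unit vector v ∈ ℝ² there exist δ_v > 0, e_v ∈ {0,1}, and constants a, b, c > 0 such that for 0 < r < c, a·r^{δ_v}|ln r|^{e_v} ≤ ∫_{{x ∈ D : |x·v| < r}} g ≤ b·r^{δ_v}|ln r|^{e_v}. If δ_v < 1/3, then there is C > 0 such that for all λ ≥ 2, ∫_D min(1, |λ·(x·v)|^{-1/3}) g(x) dx ≤ C·λ^{-δ_v}·(ln λ)^{e_v}. -/
/-!
Cut the ball into the dyadic shells `2 ^ (j - 1) ≤ |λ (x · v)| < 2 ^ j`. On the `j`-th shell the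
weight is at most `2 ^ (1/3) (2 ^ j) ^ (-1/3)`, and the `g`-mass of the shell is at most the slab
integral at `r = 2 ^ j / λ`. That integral is `O((2 ^ j) ^ δ λ ^ (-δ) ((j + 1) log λ) ^ e)`: by
the upper slab estimate for `r < c`, and by `∫_D g` for `r ≥ c`. Since `δ < 1/3` the resulting
series `∑ (j + 1) ^ e (2 ^ (δ - 1/3)) ^ j` converges.
-/

open MeasureTheory Finset Real

theorem summable_add_one_pow_mul_geometric {R : Type*} [NormedCommRing R] [CompleteSpace R]
    {q : R} (hq : ‖q‖ < 1) (e : ℕ) :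
    Summable (fun n : ℕ => ((n : R) + 1) ^ e * q ^ n) := by
  simp_rw [add_pow, one_pow, mul_one, sum_mul]
  exact summable_sum fun m _ =>
    ((summable_pow_mul_geometric_of_norm_lt_one m hq).mul_left (e.choose m : R)).congr
      fun n => by ring

theorem norm_two_rpow_sub_lt_one {δ s : ℝ} (h : δ < s) : ‖(2 : ℝ) ^ (δ - s)‖ < 1 := by
  rw [norm_of_nonneg (by positivity)]
  exact rpow_lt_one_of_one_lt_of_neg one_lt_two (by linarith)

/-- On the shell `2 ^ (j - 1) ≤ t < 2 ^ j` the `j`-th summand alone dominates `t ^ (-s)`. -/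
theorem min_one_rpow_neg_le_two_rpow_mul_sum {s t : ℝ} (hs : 0 ≤ s) {N : ℕ} (ht : t < 2 ^ N) :
    min 1 (t ^ (-s)) ≤
      2 ^ s * ∑ j ∈ range (N + 1), if t < 2 ^ j then ((2 : ℝ) ^ j) ^ (-s) else 0 := by
  induction N with
  | zero =>
    rw [pow_zero] at ht
    simp only [zero_add, range_one, sum_singleton, pow_zero, one_rpow, if_pos ht, mul_one]
    exact (min_le_left _ _).trans (one_le_rpow one_le_two hs)
  | succ N ih =>
    have hterm : ∀ j, 0 ≤ if t < 2 ^ j then ((2 : ℝ) ^ j) ^ (-s) else 0 := fun j => by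
      split_ifs <;> positivity
    have hsum := sum_nonneg fun j (_ : j ∈ range (N + 1)) => hterm j
    rw [sum_range_succ, mul_add]
    by_cases htN : t < 2 ^ N
    · linarith [ih htN, mul_nonneg (rpow_nonneg zero_le_two s) (hterm (N + 1))]
    · have h2N : (0 : ℝ) < 2 ^ N := by positivity
      calc min 1 (t ^ (-s)) ≤ ((2 : ℝ) ^ N) ^ (-s) :=
            (min_le_right _ _).trans (rpow_le_rpow_of_nonpos h2N (not_lt.1 htN) (by linarith))
        _ = 2 ^ s * ((2 : ℝ) ^ (N + 1)) ^ (-s) := by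
            rw [pow_succ, mul_rpow h2N.le zero_le_two, rpow_neg zero_le_two, mul_left_comm,
              mul_inv_cancel₀ (rpow_pos_of_pos two_pos s).ne', mul_one]
        _ ≤ _ := by
            rw [if_pos ht]
            nlinarith [rpow_nonneg zero_le_two s]

theorem integral_min_one_rpow_neg_mul_le {α : Type*} [MeasurableSpace α] {μ : Measure α}
    {f g : α → ℝ} {s : ℝ} {N : ℕ} (hs : 0 ≤ s) (hf : Measurable f) (hg : Integrable g μ)
    (hg0 : ∀ x, 0 ≤ g x) (hfN : ∀ᵐ x ∂μ, |f x| < 2 ^ N) :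
    ∫ x, min 1 (|f x| ^ (-s)) * g x ∂μ ≤
      2 ^ s * ∑ j ∈ range (N + 1),
        ((2 : ℝ) ^ j) ^ (-s) * ∫ x in {x | |f x| < 2 ^ j}, g x ∂μ := by
  set A : ℕ → Set α := fun j => {x | |f x| < 2 ^ j}
  have hA (j : ℕ) : MeasurableSet (A j) := measurableSet_lt hf.abs measurable_const
  have hAg (j : ℕ) : Integrable (fun x => ((2 : ℝ) ^ j) ^ (-s) * (A j).indicator g x) μ :=
    (hg.indicator (hA j)).const_mul _
  have hdom (x : α) (hx : |f x| < 2 ^ N) : min 1 (|f x| ^ (-s)) * g x ≤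
      2 ^ s * ∑ j ∈ range (N + 1), ((2 : ℝ) ^ j) ^ (-s) * (A j).indicator g x := by
    have := mul_le_mul_of_nonneg_right (min_one_rpow_neg_le_two_rpow_mul_sum hs hx) (hg0 x)
    simpa only [A, Set.indicator_apply, Set.mem_ofPred_eq, mul_ite, mul_zero, ite_mul, zero_mul,
      sum_mul, mul_sum, mul_assoc] using this
  calc _ ≤ ∫ x, 2 ^ s *
          ∑ j ∈ range (N + 1), ((2 : ℝ) ^ j) ^ (-s) * (A j).indicator g x ∂μ := by
        refine integral_mono_of_nonneg (.of_forall fun x => ?_) ?_ (hfN.mono hdom)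
        · exact mul_nonneg (le_min zero_le_one (rpow_nonneg (abs_nonneg _) _)) (hg0 x)
        · exact (integrable_finsetSum _ fun j _ => hAg j).const_mul _
    _ = _ := by
        rw [integral_const_mul, integral_finsetSum _ fun j _ => hAg j]
        simp_rw [integral_const_mul, integral_indicator (hA _)]
        rfl

theorem setIntegral_abs_mul_lt_restrict {α : Type*} [MeasurableSpace α] {μ : Measure α}
    {D : Set α} {t g : α → ℝ} {lam : ℝ} (ht : Measurable t) (hlam : 0 < lam) (r : ℝ) :
    ∫ x in {x | |lam * t x| < r}, g x ∂(μ.restrict D) =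
      ∫ x in {x ∈ D | |t x| < r / lam}, g x ∂μ := by
  rw [Measure.restrict_restrict (measurableSet_lt (by fun_prop) measurable_const)]
  congr 2
  ext x
  simp [abs_mul, abs_of_pos hlam, lt_div_iff₀ hlam, and_comm, mul_comm]

theorem exists_setIntegral_min_one_rpow_neg_mul_le {α : Type*} [MeasurableSpace α]
    {μ : Measure α} {D : Set α} {t g : α → ℝ} {s lam M : ℝ} (hD : MeasurableSet D)
    (hs : 0 ≤ s) (ht : Measurable t) (hg : IntegrableOn g D μ) (hg0 : ∀ x, 0 ≤ g x)
    (htM : ∀ x ∈ D, |t x| ≤ M) (hlam : 0 < lam) :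
    ∃ N : ℕ, ∫ x in D, min 1 (|lam * t x| ^ (-s)) * g x ∂μ ≤
      2 ^ s * ∑ j ∈ range (N + 1),
        ((2 : ℝ) ^ j) ^ (-s) * ∫ x in {x ∈ D | |t x| < 2 ^ j / lam}, g x ∂μ := by
  obtain ⟨N, hN⟩ := pow_unbounded_of_one_lt (lam * M) one_lt_two
  refine ⟨N, ?_⟩
  simp_rw [← setIntegral_abs_mul_lt_restrict ht hlam]
  refine integral_min_one_rpow_neg_mul_le hs (measurable_const.mul ht) hg hg0
    (ae_restrict_of_forall_mem hD fun x hx => ?_)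
  rw [abs_mul, abs_of_pos hlam]
  exact (mul_le_mul_of_nonneg_left (htM x hx) hlam.le).trans_lt hN

/-- The `max` with `log 2` lets one bound also cover `r ≥ c`, where only `F r ≤ I` is known. -/
theorem le_mul_rpow_mul_max_abs_log_pow {F : ℝ → ℝ} {I b c δ r : ℝ} {e : ℕ}
    (hI : 0 ≤ I) (hb : 0 ≤ b) (hc : 0 < c) (hδ : 0 ≤ δ) (hFI : ∀ r, c ≤ r → F r ≤ I)
    (hFc : ∀ r, 0 < r → r < c → F r ≤ b * r ^ δ * |log r| ^ e) (hr : 0 < r) :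
    F r ≤ (b + I / (c ^ δ * log 2 ^ e)) * r ^ δ * max |log r| (log 2) ^ e := by
  have hK : 0 ≤ I / (c ^ δ * log 2 ^ e) := by positivity
  rcases lt_or_ge r c with hrc | hcr
  · calc F r ≤ b * r ^ δ * |log r| ^ e := hFc r hr hrc
      _ ≤ (b + I / (c ^ δ * log 2 ^ e)) * r ^ δ * max |log r| (log 2) ^ e := by
          gcongr
          · exact le_add_of_nonneg_right hK
          · exact le_max_left _ _
  · have hbig : c ^ δ * log 2 ^ e ≤ r ^ δ * max |log r| (log 2) ^ e := by
      gcongr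
      exact le_max_right _ _
    calc F r ≤ I := hFI r hcr
      _ = I / (c ^ δ * log 2 ^ e) * (c ^ δ * log 2 ^ e) := by
          rw [div_mul_cancel₀ _ (by positivity)]
      _ ≤ I / (c ^ δ * log 2 ^ e) * (r ^ δ * max |log r| (log 2) ^ e) := by gcongr
      _ ≤ (b + I / (c ^ δ * log 2 ^ e)) * r ^ δ * max |log r| (log 2) ^ e := by
          rw [← mul_assoc]
          gcongr
          exact le_add_of_nonneg_left hb

theorem max_abs_log_two_pow_div_le {lam : ℝ} (hlam : 2 ≤ lam) (j : ℕ) :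
    max |log (2 ^ j / lam)| (log 2) ≤ (j + 1) * log lam := by
  have hlog : log 2 ≤ log lam := log_le_log two_pos hlam
  have hlog2 : 0 < log 2 := log_pos one_lt_two
  have hj : (0 : ℝ) ≤ j := j.cast_nonneg
  rw [log_div (by positivity) (by linarith), log_pow]
  refine max_le (abs_sub_le_iff.2 ⟨?_, ?_⟩) ?_ <;> nlinarith

theorem two_pow_rpow_neg_mul_div_rpow {s δ lam : ℝ} (hlam : 0 < lam) (j : ℕ) :
    ((2 : ℝ) ^ j) ^ (-s) * (2 ^ j / lam) ^ δ = (2 ^ (δ - s)) ^ j * lam ^ (-δ) := by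
  rw [div_rpow (by positivity) hlam.le, rpow_neg hlam.le, div_eq_mul_inv, ← mul_assoc,
    ← rpow_add (by positivity), ← rpow_natCast_mul zero_le_two,
    ← rpow_mul_natCast zero_le_two]
  ring_nf

theorem sum_two_pow_rpow_neg_mul_le {F : ℝ → ℝ} {K δ s lam : ℝ} {e : ℕ} (hK : 0 ≤ K)
    (hδs : δ < s) (hlam : 2 ≤ lam)
    (hF : ∀ r, 0 < r → F r ≤ K * r ^ δ * max |log r| (log 2) ^ e) (N : ℕ) :
    ∑ j ∈ range (N + 1), ((2 : ℝ) ^ j) ^ (-s) * F (2 ^ j / lam) ≤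
      K * (∑' j : ℕ, ((j : ℝ) + 1) ^ e * (2 ^ (δ - s)) ^ j) * lam ^ (-δ) * log lam ^ e := by
  have hlam₀ : 0 < lam := by linarith
  have hterm (j : ℕ) : ((2 : ℝ) ^ j) ^ (-s) * F (2 ^ j / lam) ≤
      K * (((j : ℝ) + 1) ^ e * (2 ^ (δ - s)) ^ j) * lam ^ (-δ) * log lam ^ e := by
    have hlogj := max_abs_log_two_pow_div_le hlam j
    calc ((2 : ℝ) ^ j) ^ (-s) * F (2 ^ j / lam)
        ≤ ((2 : ℝ) ^ j) ^ (-s) * (K * (2 ^ j / lam) ^ δ * ((j + 1) * log lam) ^ e) := by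
          gcongr
          refine (hF _ (by positivity)).trans ?_
          gcongr
      _ = _ := by
          rw [mul_pow]
          linear_combination (K * ((j : ℝ) + 1) ^ e * log lam ^ e) *
            two_pow_rpow_neg_mul_div_rpow (s := s) (δ := δ) hlam₀ j
  refine (sum_le_sum fun j _ => hterm j).trans ?_
  rw [← sum_mul, ← sum_mul, ← mul_sum]
  have := (log_pos (by linarith : (1 : ℝ) < lam)).le
  gcongr
  exact (summable_add_one_pow_mul_geometric (norm_two_rpow_sub_lt_one hδs) e).sum_le_tsum _
    fun j _ => by positivity

theorem stmt_15_general (ctr : ℝ × ℝ) (R : ℝ) (g : ℝ × ℝ → ℝ)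
    (hg0 : ∀ x, 0 ≤ g x)
    (hgint : IntegrableOn g (Metric.ball ctr R))
    (v : ℝ × ℝ) (δ : ℝ) (e : ℕ) (a b c : ℝ)
    (hδ : 0 < δ) (hδ' : δ < 1 / 3)
    (hb : 0 < b) (hc : 0 < c)
    (hslab : ∀ r : ℝ, 0 < r → r < c →
      a * r ^ δ * |Real.log r| ^ e ≤
        (∫ x in {x ∈ Metric.ball ctr R | |x.1 * v.1 + x.2 * v.2| < r}, g x) ∧
      (∫ x in {x ∈ Metric.ball ctr R | |x.1 * v.1 + x.2 * v.2| < r}, g x) ≤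
        b * r ^ δ * |Real.log r| ^ e) :
    ∃ C > (0 : ℝ), ∀ lam : ℝ, 2 ≤ lam →
      (∫ x in Metric.ball ctr R,
          min 1 (|lam * (x.1 * v.1 + x.2 * v.2)| ^ (-(1 / 3 : ℝ))) * g x) ≤
        C * lam ^ (-δ) * (Real.log lam) ^ e := by
  set I := ∫ x in Metric.ball ctr R, g x
  set K := b + I / (c ^ δ * log 2 ^ e)
  set S := ∑' j : ℕ, ((j : ℝ) + 1) ^ e * (2 ^ (δ - 1 / 3)) ^ j
  have hI : 0 ≤ I := setIntegral_nonneg measurableSet_ball fun x _ => hg0 x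
  have hS : 0 < S :=
    (summable_add_one_pow_mul_geometric (norm_two_rpow_sub_lt_one hδ') e).tsum_pos
      (fun j => by positivity) 0 (by simp)
  have hslab_le (r : ℝ) (hr : 0 < r) := le_mul_rpow_mul_max_abs_log_pow
    (F := fun r => ∫ x in {x ∈ Metric.ball ctr R | |x.1 * v.1 + x.2 * v.2| < r}, g x)
    hI hb.le hc hδ.le
    (fun r _ => setIntegral_mono_set hgint (.of_forall hg0) (.of_forall fun x hx => hx.1))
    (fun r hr hrc => (hslab r hr hrc).2) hr
  obtain ⟨M, hM⟩ := (isCompact_closedBall ctr R).exists_bound_of_continuousOn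
    (f := fun x : ℝ × ℝ => x.1 * v.1 + x.2 * v.2) (by fun_prop)
  refine ⟨2 ^ (1 / 3 : ℝ) * K * S, by positivity, fun lam hlam => ?_⟩
  obtain ⟨N, hN⟩ := exists_setIntegral_min_one_rpow_neg_mul_le (s := 1 / 3) measurableSet_ball
    (by norm_num) (by fun_prop) hgint hg0 (fun x hx => hM x (Metric.ball_subset_closedBall hx))
    (by linarith : (0 : ℝ) < lam)
  calc _ ≤ _ := hN
    _ ≤ 2 ^ (1 / 3 : ℝ) * (K * S * lam ^ (-δ) * log lam ^ e) := by
        gcongr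
        exact sum_two_pow_rpow_neg_mul_le (by positivity) hδ' hlam hslab_le N
    _ = _ := by ring

/-- Step from (5.18) to (5.19): a two-sided slab-measure estimate
`a r^δ |ln r|^e ≤ ∫_{|x·v| < r} g ≤ b r^δ |ln r|^e` with `δ < 1/3` implies
`∫_D min(1, |λ (x·v)|^{-1/3}) g ≤ C λ^{-δ} (ln λ)^e` for λ ≥ 2. -/
theorem stmt_15 (ctr : ℝ × ℝ) (R : ℝ) (hR : 0 < R) (g : ℝ × ℝ → ℝ)
    (hg : Measurable g) (hg0 : ∀ x, 0 ≤ g x)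
    (hgint : IntegrableOn g (Metric.ball ctr R))
    (v : ℝ × ℝ) (hv : ‖v‖ = 1) (δ : ℝ) (e : ℕ) (a b c : ℝ)
    (hδ : 0 < δ) (hδ' : δ < 1 / 3) (he : e ≤ 1)
    (ha : 0 < a) (hb : 0 < b) (hc : 0 < c)
    (hslab : ∀ r : ℝ, 0 < r → r < c →
      a * r ^ δ * |Real.log r| ^ e ≤
        (∫ x in {x ∈ Metric.ball ctr R | |x.1 * v.1 + x.2 * v.2| < r}, g x) ∧
      (∫ x in {x ∈ Metric.ball ctr R | |x.1 * v.1 + x.2 * v.2| < r}, g x) ≤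
        b * r ^ δ * |Real.log r| ^ e) :
    ∃ C > (0 : ℝ), ∀ lam : ℝ, 2 ≤ lam →
      (∫ x in Metric.ball ctr R,
          min 1 (|lam * (x.1 * v.1 + x.2 * v.2)| ^ (-(1 / 3 : ℝ))) * g x) ≤
        C * lam ^ (-δ) * (Real.log lam) ^ e :=
  stmt_15_general ctr R g hg0 hgint v δ e a b c hδ hδ' hb hc hslab
end
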